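/- Let Σ be the signature with a 2-place connective → and a 1-place connective □, and let MP□ = ⟨{0,1}, {1}, ·⟩ be the Σ-Nmatrix with →(1,0) = {0}, →(x,y) = {0,1} for all other pairs, □(0) = {0,1}, and □(1) = {1}. Then ⊢_{MP□} coincides exactly with the consequence relation generated by the Hilbert-style rules of modus ponens (from p and p → q infer q) and necessitation (from p infer □p): Γ ⊢_{MP□} A if and only if A belongs to the least set containing Γ and closed under these two rules. -/

import Mathlib

set_option autoImplicit false

namespace PNPaper

/-- Formulas over a propositional signature given by a type `C` of connectives
with arity function `ar`, generated over a set (type) `P` of sentential variables. -/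
inductive Fm (C : Type) (ar : C → ℕ) (P : Type) : Type where
  | var : P → Fm C ar P
  | app : (c : C) → (Fin (ar c) → Fm C ar P) → Fm C ar P

variable {C : Type} {ar : C → ℕ} {P Q : Type} {V W : Type}

/-- Substitution, extended to the unique endomorphism of the formula algebra. -/
def Fm.subst (σ : Q → Fm C ar P) : Fm C ar Q → Fm C ar P
  | .var q => σ q
  | .app c As => .app c (fun i => (As i).subst σ)

/-- The set of substitution instances of formulas in `Ax`. -/
def instSet (Ax : Set (Fm C ar P)) : Set (Fm C ar P) :=
  {B | ∃ A ∈ Ax, ∃ σ : P → Fm C ar P, B = A.subst σ}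

/-- A formula uses only connectives from `S`. -/
def Fm.usesOnly (S : Set C) : Fm C ar P → Prop
  | .var _ => True
  | .app c As => c ∈ S ∧ ∀ i, (As i).usesOnly S

/-- All variables of the formula belong to `Vs`. -/
def Fm.varsIn (Vs : Set P) : Fm C ar P → Prop
  | .var p => p ∈ Vs
  | .app _ As => ∀ i, (As i).varsIn Vs

/-- A Σ-PNmatrix: a set of truth-values (carrier), designated values,
and a (possibly partial, non-deterministic) truth-table for each connective. -/
structure Mat (C : Type) (ar : C → ℕ) (V : Type) where
  carrier : Set V
  desig : Set V
  int : (c : C) → (Fin (ar c) → V) → Set V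

/-- Well-formedness: `D ⊆ V` and truth-tables take values in `V`. -/
def Mat.WF (M : Mat C ar V) : Prop :=
  M.desig ⊆ M.carrier ∧
  ∀ (c : C) (xs : Fin (ar c) → V), (∀ i, xs i ∈ M.carrier) → M.int c xs ⊆ M.carrier

/-- An `M`-valuation. -/
def Mat.IsVal (M : Mat C ar V) (v : Fm C ar P → V) : Prop :=
  (∀ A, v A ∈ M.carrier) ∧
  ∀ (c : C) (As : Fin (ar c) → Fm C ar P), v (.app c As) ∈ M.int c (fun i => v (As i))

/-- The (single conclusion) consequence relation `⊢_M`. -/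
def Mat.Conseq (M : Mat C ar V) (Γ : Set (Fm C ar P)) (A : Fm C ar P) : Prop :=
  ∀ v : Fm C ar P → V, M.IsVal v → (∀ B ∈ Γ, v B ∈ M.desig) → v A ∈ M.desig

/-- The strengthening `⊢_M^Ax` of `⊢_M` with (schema) axioms `Ax`. -/
def Mat.ConseqAx (M : Mat C ar V) (Ax Γ : Set (Fm C ar P)) (A : Fm C ar P) : Prop :=
  M.Conseq (Γ ∪ instSet Ax) A

/-- The multiple-conclusion consequence relation `▷_M`. -/
def Mat.MConseq (M : Mat C ar V) (Γ Δ : Set (Fm C ar P)) : Prop :=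
  ∀ v : Fm C ar P → V, M.IsVal v → (∀ B ∈ Γ, v B ∈ M.desig) → ∃ B ∈ Δ, v B ∈ M.desig

/-- The set `A_M(x₁,…,xₙ)` of possible values of `A` when `pᵢ ↦ xᵢ`. -/
def Mat.fmSet (M : Mat C ar V) (n : ℕ) (A : Fm C ar ℕ) (xs : Fin n → V) : Set V :=
  {y | ∃ v : Fm C ar ℕ → V, M.IsVal v ∧ (∀ i : Fin n, v (Fm.var i.1) = xs i) ∧ v A = y}

/-- `M` is `S`-deterministic. -/
def Mat.DetOn (M : Mat C ar V) (S : Set C) : Prop :=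
  ∀ c ∈ S, ∀ xs : Fin (ar c) → V, (∀ i, xs i ∈ M.carrier) → (M.int c xs).Subsingleton

/-- `M` is total. -/
def Mat.Total (M : Mat C ar V) : Prop :=
  ∀ (c : C) (xs : Fin (ar c) → V), (∀ i, xs i ∈ M.carrier) → (M.int c xs).Nonempty

/-- `M'` is a refinement of `M`. -/
def IsRefinement (M' M : Mat C ar V) : Prop :=
  M'.carrier ⊆ M.carrier ∧
  M'.desig = M.desig ∩ M'.carrier ∧
  ∀ (c : C) (xs : Fin (ar c) → V), (∀ i, xs i ∈ M'.carrier) → M'.int c xs ⊆ M.int c xs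

/-- `E` is an expansion function for `M` with contraction `ct`:
the sets `E x` (for truth-values `x` of `M`) are non-empty and `ct` picks, for each
element of `E x`, the unique `x` it expands (this forces pairwise disjointness). -/
def IsExpansion (M : Mat C ar V) (E : V → Set W) (ct : W → V) : Prop :=
  (∀ x ∈ M.carrier, (E x).Nonempty) ∧
  (∀ x ∈ M.carrier, ∀ y ∈ E x, ct y = x)

/-- The `E`-expansion of `M`. -/
def expMat (M : Mat C ar V) (E : V → Set W) (ct : W → V) : Mat C ar W where
  carrier := ⋃ x ∈ M.carrier, E x
  desig := ⋃ x ∈ M.desig, E x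
  int := fun c ys => ⋃ x ∈ M.int c (fun i => ct (ys i)), E x

/-- A rexpansion of `M` is a refinement of some `E`-expansion of `M`. -/
def IsRexpansion (M' : Mat C ar W) (M : Mat C ar V) : Prop :=
  ∃ (E : V → Set W) (ct : W → V), IsExpansion M E ct ∧ IsRefinement M' (expMat M E ct)

/-- The signature with a 2-place connective `→` and a 1-place connective `□`. -/
inductive MConn : Type where
  | imp : MConn
  | box : MConn

/-- Arities for the modal signature. -/
def mAr : MConn → ℕ
  | .imp => 2
  | .box => 1

/-- Formulas of the modal signature. -/
abbrev Fm8 := Fm MConn mAr ℕ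

/-- Implication `A → B`. -/
def mimp (A B : Fm8) : Fm8 := Fm.app MConn.imp ![A, B]

/-- Box `□A`. -/
def mbox (A : Fm8) : Fm8 := Fm.app MConn.box ![A]

/-- The two-valued Nmatrix `MP□` with `→(1,0) = {0}`, `→(x,y) = {0,1}` otherwise,
`□(0) = {0,1}` and `□(1) = {1}`. -/
def MPBox : Mat MConn mAr Bool where
  carrier := Set.univ
  desig := {true}
  int := fun c => match c with
    | .imp => fun xs : Fin 2 → Bool =>
        if xs 0 = true ∧ xs 1 = false then {false} else Set.univ
    | .box => fun xs : Fin 1 → Bool =>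
        if xs 0 = true then {true} else Set.univ

/-- Derivability by modus ponens and necessitation: the least set containing `Γ`
and closed under the two rules. -/
inductive MPBoxDeriv (Γ : Set Fm8) : Fm8 → Prop where
  | prem {A : Fm8} : A ∈ Γ → MPBoxDeriv Γ A
  | mp {A B : Fm8} : MPBoxDeriv Γ A → MPBoxDeriv Γ (mimp A B) → MPBoxDeriv Γ B
  | nec {A : Fm8} : MPBoxDeriv Γ A → MPBoxDeriv Γ (mbox A)

/-! The tables of `MP□` constrain a two-valued valuation `v` only by: if `A` and `A → B` are
designated then so is `B`, and if `A` is designated then so is `□A`. Hence soundness of the two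
rules is an induction on derivations, and for completeness the characteristic function of
derivability from `Γ` is itself a valuation, designating `Γ` and nothing underivable. -/

lemma app_imp_eq_mimp (As : Fin 2 → Fm8) : Fm.app MConn.imp As = mimp (As 0) (As 1) := by
  unfold mimp; congr 1; funext i; fin_cases i <;> rfl

lemma app_box_eq_mbox (As : Fin 1 → Fm8) : Fm.app MConn.box As = mbox (As 0) := by
  unfold mbox; congr 1; funext i; fin_cases i; rfl

theorem MPBox.isVal_iff {v : Fm8 → Bool} :
    MPBox.IsVal v ↔
      (∀ A B, v A = true → v (mimp A B) = true → v B = true) ∧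
        ∀ A, v A = true → v (mbox A) = true := by
  constructor
  · rintro ⟨-, hv⟩
    refine ⟨fun A B hA hAB => ?_, fun A hA => ?_⟩
    · by_contra hB
      have h := hv MConn.imp ![A, B]
      simp_all [MPBox, mimp]
    · have h := hv MConn.box ![A]
      simp_all [MPBox, mbox]
  · rintro ⟨hmp, hnec⟩
    refine ⟨fun _ => Set.mem_univ _, fun c As => ?_⟩
    cases c with
    | imp =>
      simp only [MPBox]
      split_ifs with h
      · rw [app_imp_eq_mimp As]
        exact Bool.eq_false_iff.mpr fun hAB => by simpa [h.2] using hmp _ _ h.1 hAB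
      · exact Set.mem_univ _
    | box =>
      simp only [MPBox]
      split_ifs with h
      · rw [app_box_eq_mbox As]
        exact hnec _ h
      · exact Set.mem_univ _

theorem MPBoxDeriv.sound {Γ : Set Fm8} {A : Fm8} (h : MPBoxDeriv Γ A) : MPBox.Conseq Γ A := by
  intro v hv hΓ
  have ⟨hmp, hnec⟩ := MPBox.isVal_iff.mp hv
  induction h with
  | prem hA => exact hΓ _ hA
  | mp _ _ ihA ihAB => exact hmp _ _ ihA ihAB
  | nec _ ihA => exact hnec _ ihA

open Classical in
theorem MPBox.isVal_decide_deriv (Γ : Set Fm8) :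
    MPBox.IsVal fun B => decide (MPBoxDeriv Γ B) :=
  MPBox.isVal_iff.mpr
    ⟨fun _ _ hA hAB => decide_eq_true <| (of_decide_eq_true hA).mp (of_decide_eq_true hAB),
      fun _ hA => decide_eq_true (of_decide_eq_true hA).nec⟩

open Classical in
/-- `⊢_{MP□}` coincides exactly with the consequence relation generated by
modus ponens and necessitation. -/
theorem stmt8 (Γ : Set Fm8) (A : Fm8) :
    MPBox.Conseq Γ A ↔ MPBoxDeriv Γ A :=
  ⟨fun h => of_decide_eq_true <|
      h _ (MPBox.isVal_decide_deriv Γ) fun _ hB => decide_eq_true (.prem hB),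
    MPBoxDeriv.sound⟩

end PNPaper
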